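/- Let a, b : ℝ³ → ℝ be smooth functions of (x, y, t) satisfying the system (MS2): ∂_x(a_t + a a_y + b a_x) = ∂_y(a_y) and ∂_x(b_t + b b_x − a b_y) = ∂_y(b_y − 2 a b_x). Consider ℝ⁴ with coordinates (x, y, t, λ) and the vector fields X₁ = ∂_t − (λ² − aλ − b)∂_x + m ∂_λ and X₂ = ∂_y − λ ∂_x + n ∂_λ, where m = −a_x λ² + (a a_x − a_y − b_x) λ + (a b_x − b_y) and n = −a_x λ − b_x. Then X₁ and X₂ commute identically on ℝ⁴. -/

import Mathlib

noncomputable section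

/-- Partial derivative of `f` along the `i`-th coordinate direction on `ℝⁿ`.
Coordinates on `ℝ³` are `(x, y, t) = (0, 1, 2)`; on `ℝ⁴` they are
`(x, y, t, λ) = (0, 1, 2, 3)`. -/
def pd {n : ℕ} (i : Fin n) (f : (Fin n → ℝ) → ℝ) : (Fin n → ℝ) → ℝ :=
  fun x => fderiv ℝ f x (Pi.single i 1)

/-- Lie bracket of vector fields on `ℝⁿ`:
`[X,Y](p) = (DY)(p)(X(p)) − (DX)(p)(Y(p))`. -/
def lieBr {n : ℕ} (X Y : (Fin n → ℝ) → (Fin n → ℝ)) :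
    (Fin n → ℝ) → (Fin n → ℝ) :=
  fun p => fderiv ℝ Y p (X p) - fderiv ℝ X p (Y p)

/-- Projection `(x, y, t, λ) ↦ (x, y, t)`. -/
def π3 (p : Fin 4 → ℝ) : Fin 3 → ℝ := ![p 0, p 1, p 2]

/-- First equation of system (MS2): `(a_t + a a_y + b a_x)_x = (a_y)_y`. -/
def MS2eq1 (a b : (Fin 3 → ℝ) → ℝ) : Prop :=
  ∀ x : Fin 3 → ℝ,
    pd 0 (fun y => pd 2 a y + a y * pd 1 a y + b y * pd 0 a y) x
      = pd 1 (pd 1 a) x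

/-- Second equation of system (MS2): `(b_t + b b_x − a b_y)_x = (b_y − 2 a b_x)_y`. -/
def MS2eq2 (a b : (Fin 3 → ℝ) → ℝ) : Prop :=
  ∀ x : Fin 3 → ℝ,
    pd 0 (fun y => pd 2 b y + b y * pd 0 b y - a y * pd 1 b y) x
      = pd 1 (fun y => pd 1 b y - 2 * a y * pd 0 b y) x

/-- `X₁ = ∂_t − (λ² − aλ − b)∂_x + m ∂_λ` with
`m = −a_x λ² + (a a_x − a_y − b_x)λ + (a b_x − b_y)`. -/
def ms2Lax1 (a b : (Fin 3 → ℝ) → ℝ) : (Fin 4 → ℝ) → (Fin 4 → ℝ) :=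
  fun p =>
    ![-((p 3) ^ 2 - a (π3 p) * p 3 - b (π3 p)), 0, 1,
      -(pd 0 a (π3 p)) * (p 3) ^ 2
        + (a (π3 p) * pd 0 a (π3 p) - pd 1 a (π3 p) - pd 0 b (π3 p)) * p 3
        + (a (π3 p) * pd 0 b (π3 p) - pd 1 b (π3 p))]

/-- `X₂ = ∂_y − λ∂_x + n ∂_λ` with `n = −a_x λ − b_x`. -/
def ms2Lax2 (a b : (Fin 3 → ℝ) → ℝ) : (Fin 4 → ℝ) → (Fin 4 → ℝ) :=
  fun p => ![-(p 3), 1, 0, -(pd 0 a (π3 p)) * p 3 - pd 0 b (π3 p)]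

/-!
`X₁` and `X₂` form a Lax pair for (MS2). Their `∂_y` and `∂_t` coefficients are constant, so
those components of `[X₁, X₂]` vanish, and the `∂_x` component cancels for arbitrary `a, b`.
Once mixed partials are exchanged (Schwarz, hence `C²`), the `∂_λ` component equals
`−λ E₁ − E₂`, where `E₁, E₂` are the differences of the two sides of the equations of (MS2).
-/

section PartialDerivatives

variable {n : ℕ}

lemma contDiff_pd {k : ℕ} (i : Fin n) {f : (Fin n → ℝ) → ℝ} (hf : ContDiff ℝ (k + 1) f) :
    ContDiff ℝ k (pd i f) :=
  (hf.fderiv_right le_rfl).clm_apply contDiff_const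

lemma fderiv_apply_eq_sum_pd (g : (Fin n → ℝ) → ℝ) (x w : Fin n → ℝ) :
    fderiv ℝ g x w = ∑ i, w i * pd i g x := by
  rw [← ContinuousLinearMap.coe_coe, LinearMap.pi_apply_eq_sum_univ]
  refine Finset.sum_congr rfl fun i _ => ?_
  simp only [smul_eq_mul, pd, ContinuousLinearMap.coe_coe]
  congr 2
  ext j
  simp [Pi.single_apply, eq_comm]

lemma pd_comm {f : (Fin n → ℝ) → ℝ} (hf : ContDiff ℝ 2 f) (i j : Fin n) (x : Fin n → ℝ) :
    pd i (pd j f) x = pd j (pd i f) x := by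
  have hf' : Differentiable ℝ (fderiv ℝ f) := (hf.fderiv_right le_rfl).differentiable one_ne_zero
  have hsymm : IsSymmSndFDerivAt ℝ f x := hf.contDiffAt.isSymmSndFDerivAt (by simp)
  unfold pd
  simp only [fderiv_clm_apply (hf' x) (differentiableAt_const _), fderiv_fun_const, Pi.zero_apply,
    ContinuousLinearMap.comp_zero, zero_add, ContinuousLinearMap.flip_apply, hsymm _]

variable {f g : (Fin n → ℝ) → ℝ} {x : Fin n → ℝ} {i : Fin n}

lemma pd_add (hf : DifferentiableAt ℝ f x) (hg : DifferentiableAt ℝ g x) :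
    pd i (fun y => f y + g y) x = pd i f x + pd i g x := by
  rw [pd, fderiv_fun_add hf hg]; rfl

lemma pd_sub (hf : DifferentiableAt ℝ f x) (hg : DifferentiableAt ℝ g x) :
    pd i (fun y => f y - g y) x = pd i f x - pd i g x := by
  rw [pd, fderiv_fun_sub hf hg]; rfl

lemma pd_mul (hf : DifferentiableAt ℝ f x) (hg : DifferentiableAt ℝ g x) :
    pd i (fun y => f y * g y) x = pd i f x * g x + f x * pd i g x := by
  simp only [pd, fderiv_fun_mul hf hg, add_apply, smul_apply, smul_eq_mul]
  ring

lemma pd_neg : pd i (fun y => -f y) x = -pd i f x := by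
  rw [pd, fderiv_fun_neg]; rfl

lemma pd_const (c : ℝ) : pd i (fun _ => c) x = 0 := by
  rw [pd, fderiv_fun_const]; rfl

lemma pd_apply_coord (j : Fin n) : pd i (fun y => y j) x = (Pi.single i 1 : Fin n → ℝ) j := by
  rw [pd, fderiv_apply differentiableAt_id j, fderiv_fun_id]
  rfl

end PartialDerivatives

lemma lieBr_apply {n : ℕ} {X Y : (Fin n → ℝ) → (Fin n → ℝ)} {p : Fin n → ℝ}
    (hX : DifferentiableAt ℝ X p) (hY : DifferentiableAt ℝ Y p) (i : Fin n) :
    lieBr X Y p i = fderiv ℝ (fun q => Y q i) p (X p) - fderiv ℝ (fun q => X q i) p (Y p) := by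
  simp [lieBr, fderiv_apply hX, fderiv_apply hY]

def π3CLM : (Fin 4 → ℝ) →L[ℝ] (Fin 3 → ℝ) :=
  ContinuousLinearMap.pi fun j : Fin 3 => ContinuousLinearMap.proj (Fin.castSucc j)

lemma coe_π3CLM : ⇑π3CLM = π3 := by
  funext p j; fin_cases j <;> rfl

@[fun_prop]
lemma differentiable_π3 : Differentiable ℝ π3 :=
  coe_π3CLM ▸ π3CLM.differentiable

section CompProjection

variable {g : (Fin 3 → ℝ) → ℝ} {p : Fin 4 → ℝ}

lemma fderiv_comp_π3_apply (hg : DifferentiableAt ℝ g (π3 p)) (v : Fin 4 → ℝ) :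
    fderiv ℝ (fun q => g (π3 q)) p v = fderiv ℝ g (π3 p) (π3 v) := by
  rw [fderiv_fun_comp p hg (differentiable_π3 p), ← coe_π3CLM, π3CLM.fderiv]
  rfl

lemma pd_castSucc_comp_π3 (hg : DifferentiableAt ℝ g (π3 p)) (i : Fin 3) :
    pd i.castSucc (fun q => g (π3 q)) p = pd i g (π3 p) := by
  have hπ : π3 (Pi.single i.castSucc 1) = Pi.single i 1 := by
    funext j; fin_cases i <;> fin_cases j <;> rfl
  rw [pd, pd, fderiv_comp_π3_apply hg, hπ]

lemma pd_three_comp_π3 (hg : DifferentiableAt ℝ g (π3 p)) : pd 3 (fun q => g (π3 q)) p = 0 := by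
  have hπ : π3 (Pi.single 3 1) = 0 := by
    funext j; fin_cases j <;> rfl
  rw [pd, fderiv_comp_π3_apply hg, hπ, map_zero]

lemma pd_zero_comp_π3 (hg : DifferentiableAt ℝ g (π3 p)) :
    pd 0 (fun q => g (π3 q)) p = pd 0 g (π3 p) :=
  pd_castSucc_comp_π3 hg 0

lemma pd_one_comp_π3 (hg : DifferentiableAt ℝ g (π3 p)) :
    pd 1 (fun q => g (π3 q)) p = pd 1 g (π3 p) :=
  pd_castSucc_comp_π3 hg 1

lemma pd_two_comp_π3 (hg : DifferentiableAt ℝ g (π3 p)) :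
    pd 2 (fun q => g (π3 q)) p = pd 2 g (π3 p) :=
  pd_castSucc_comp_π3 hg 2

end CompProjection

def ms2Residual1 (a b : (Fin 3 → ℝ) → ℝ) (x : Fin 3 → ℝ) : ℝ :=
  pd 0 (fun y => pd 2 a y + a y * pd 1 a y + b y * pd 0 a y) x - pd 1 (pd 1 a) x

def ms2Residual2 (a b : (Fin 3 → ℝ) → ℝ) (x : Fin 3 → ℝ) : ℝ :=
  pd 0 (fun y => pd 2 b y + b y * pd 0 b y - a y * pd 1 b y) x
    - pd 1 (fun y => pd 1 b y - 2 * a y * pd 0 b y) x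

section LaxPair

variable {a b : (Fin 3 → ℝ) → ℝ}

lemma differentiable_ms2Lax1 (ha : ContDiff ℝ 2 a) (hb : ContDiff ℝ 2 b) :
    Differentiable ℝ (ms2Lax1 a b) := by
  have := ha.differentiable two_ne_zero
  have := hb.differentiable two_ne_zero
  have := (contDiff_pd 0 ha).differentiable one_ne_zero
  have := (contDiff_pd 1 ha).differentiable one_ne_zero
  have := (contDiff_pd 0 hb).differentiable one_ne_zero
  have := (contDiff_pd 1 hb).differentiable one_ne_zero
  refine differentiable_pi.2 fun j => ?_
  fin_cases j <;>
    simp only [ms2Lax1, Fin.zero_eta, Fin.mk_one, Fin.reduceFinMk, Matrix.cons_val_zero,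
      Matrix.cons_val_one, Matrix.cons_val] <;>
    fun_prop

lemma differentiable_ms2Lax2 (ha : ContDiff ℝ 2 a) (hb : ContDiff ℝ 2 b) :
    Differentiable ℝ (ms2Lax2 a b) := by
  have := (contDiff_pd 0 ha).differentiable one_ne_zero
  have := (contDiff_pd 0 hb).differentiable one_ne_zero
  refine differentiable_pi.2 fun j => ?_
  fin_cases j <;>
    simp only [ms2Lax2, Fin.zero_eta, Fin.mk_one, Fin.reduceFinMk, Matrix.cons_val_zero,
      Matrix.cons_val_one, Matrix.cons_val] <;>
    fun_prop

lemma lieBr_ms2Lax1_ms2Lax2 (ha : ContDiff ℝ 2 a) (hb : ContDiff ℝ 2 b) (p : Fin 4 → ℝ) :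
    lieBr (ms2Lax1 a b) (ms2Lax2 a b) p
      = ![0, 0, 0, -p 3 * ms2Residual1 a b (π3 p) - ms2Residual2 a b (π3 p)] := by
  have := ha.differentiable two_ne_zero
  have := hb.differentiable two_ne_zero
  have : ∀ i, Differentiable ℝ (pd i a) := fun i => (contDiff_pd i ha).differentiable one_ne_zero
  have : ∀ i, Differentiable ℝ (pd i b) := fun i => (contDiff_pd i hb).differentiable one_ne_zero
  have ha_xy : pd 1 (pd 0 a) (π3 p) = pd 0 (pd 1 a) (π3 p) := pd_comm ha 1 0 _
  have ha_xt : pd 2 (pd 0 a) (π3 p) = pd 0 (pd 2 a) (π3 p) := pd_comm ha 2 0 _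
  have hb_xy : pd 1 (pd 0 b) (π3 p) = pd 0 (pd 1 b) (π3 p) := pd_comm hb 1 0 _
  have hb_xt : pd 2 (pd 0 b) (π3 p) = pd 0 (pd 2 b) (π3 p) := pd_comm hb 2 0 _
  funext i
  rw [lieBr_apply (differentiable_ms2Lax1 ha hb p) (differentiable_ms2Lax2 ha hb p)]
  fin_cases i <;>
    simp (disch := fun_prop) only [ms2Lax1, ms2Lax2, ms2Residual1, ms2Residual2, Fin.zero_eta,
      Fin.mk_one, Fin.reduceFinMk, Matrix.cons_val_zero, Matrix.cons_val_one, Matrix.cons_val,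
      fderiv_apply_eq_sum_pd, Fin.sum_univ_four, pow_two, pd_add, pd_sub, pd_mul, pd_neg, pd_const, pd_apply_coord,
      pd_zero_comp_π3, pd_one_comp_π3, pd_two_comp_π3, pd_three_comp_π3, Pi.single_apply,
      Fin.reduceEq, ↓reduceIte, ha_xy, ha_xt, hb_xy, hb_xt] <;>
    ring

end LaxPair

/-- If smooth `(a, b)` solves system (MS2), then the Lax fields `X₁, X₂` commute
identically on `ℝ⁴`. -/
theorem MS2_lax_commute
    (a b : (Fin 3 → ℝ) → ℝ)
    (ha : ContDiff ℝ (⊤ : ℕ∞) a)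
    (hb : ContDiff ℝ (⊤ : ℕ∞) b)
    (h1 : MS2eq1 a b)
    (h2 : MS2eq2 a b) :
    ∀ p : Fin 4 → ℝ, lieBr (ms2Lax1 a b) (ms2Lax2 a b) p = 0 := by
  intro p
  have hr1 : ms2Residual1 a b (π3 p) = 0 := sub_eq_zero.2 (h1 _)
  have hr2 : ms2Residual2 a b (π3 p) = 0 := sub_eq_zero.2 (h2 _)
  rw [lieBr_ms2Lax1_ms2Lax2 (ha.of_le (by norm_cast)) (hb.of_le (by norm_cast)) p, hr1, hr2]
  simp
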